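/- Let μ be a measure, 0 < p < 2, F measurable with ∫|F|^p dμ < ∞, μ({F=0}) = 0, and ν = |F|^{p-2} dμ. For every t ∈ ℂ and every h ∈ L²(ν): ∫ |F + th|^p dμ ≤ ∫ |F|^p dμ + p·Re(t·∫ |F|^{p-2}conj(F)h dμ) + (p/2)|t|²·∫ |h|² dν. -/

import Mathlib

/-!
For `p ≤ 2` the map `s ↦ s ^ (p / 2)` is concave on `[0, ∞)`, so it lies below its tangent line
at `‖F x‖ ^ 2`. Evaluating at `‖F x + t h x‖ ^ 2 = ‖F x‖ ^ 2 + 2 Re (conj (F x) t h x) + |t|² ‖h x‖ ^ 2`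
gives the pointwise inequality wherever `F x ≠ 0`, that is `μ`-a.e. Integration is legitimate
because `|F|^{p-1} |h| ≤ (|F|^p + |F|^{p-2} |h|²) / 2` makes the cross term integrable.
-/

open MeasureTheory ENNReal ComplexConjugate

namespace Real

theorem rpow_le_rpow_add_mul_sub {a b q : ℝ} (ha : 0 < a) (hb : 0 ≤ b) (hq0 : 0 ≤ q)
    (hq1 : q ≤ 1) : b ^ q ≤ a ^ q + q * a ^ (q - 1) * (b - a) := by
  have hbern : (1 + (b / a - 1)) ^ q ≤ 1 + q * (b / a - 1) :=
    rpow_one_add_le_one_add_mul_self (by linarith [div_nonneg hb ha.le]) hq0 hq1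
  rw [add_sub_cancel, div_rpow hb ha.le, div_le_iff₀ (rpow_pos_of_pos ha q)] at hbern
  rw [rpow_sub_one ha.ne']
  calc b ^ q ≤ (1 + q * (b / a - 1)) * a ^ q := hbern
    _ = a ^ q + q * (a ^ q / a) * (b - a) := by field_simp

theorem sq_rpow_half {x : ℝ} (hx : 0 ≤ x) (r : ℝ) : (x ^ 2) ^ (r / 2) = x ^ r := by
  rw [← rpow_natCast, ← rpow_mul hx]
  congr 1
  ring

theorem rpow_sub_two_mul_mul_le {a : ℝ} (ha : 0 ≤ a) (p b : ℝ) :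
    a ^ (p - 2) * a * b ≤ (a ^ p + a ^ (p - 2) * b ^ 2) / 2 := by
  have hsq : a ^ (p - 2) * a ^ 2 ≤ a ^ p := by
    have := le_rpow_add ha (p - 2) 2
    rwa [rpow_two, sub_add_cancel] at this
  nlinarith [mul_nonneg (rpow_nonneg ha (p - 2)) (sq_nonneg (a - b))]

end Real

open RealInnerProductSpace in
theorem norm_add_rpow_le {E : Type*} [NormedAddCommGroup E] [InnerProductSpace ℝ E] {p : ℝ}
    (hp0 : 0 ≤ p) (hp2 : p ≤ 2) {z : E} (hz : z ≠ 0) (v : E) :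
    ‖z + v‖ ^ p ≤ ‖z‖ ^ p + p * ‖z‖ ^ (p - 2) * ⟪z, v⟫ + p / 2 * ‖z‖ ^ (p - 2) * ‖v‖ ^ 2 := by
  have key := Real.rpow_le_rpow_add_mul_sub (pow_pos (norm_pos_iff.2 hz) 2) (sq_nonneg ‖z + v‖)
    (by linarith : 0 ≤ p / 2) (by linarith : p / 2 ≤ 1)
  rw [show p / 2 - 1 = (p - 2) / 2 by ring, Real.sq_rpow_half (norm_nonneg _),
    Real.sq_rpow_half (norm_nonneg _), Real.sq_rpow_half (norm_nonneg _), norm_add_sq_real] at key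
  linarith

theorem Complex.norm_add_mul_rpow_le {p : ℝ} (hp0 : 0 ≤ p) (hp2 : p ≤ 2) {z : ℂ} (hz : z ≠ 0)
    (t w : ℂ) :
    ‖z + t * w‖ ^ p ≤ ‖z‖ ^ p + p * (t * (((‖z‖ ^ (p - 2) : ℝ) : ℂ) * conj z * w)).re
      + p / 2 * ‖t‖ ^ 2 * (‖z‖ ^ (p - 2) * ‖w‖ ^ 2) := by
  have key := norm_add_rpow_le hp0 hp2 hz (t * w)
  have hre : (t * (((‖z‖ ^ (p - 2) : ℝ) : ℂ) * conj z * w)).re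
      = ‖z‖ ^ (p - 2) * (t * w * conj z).re := by
    rw [← Complex.re_ofReal_mul]; ring_nf
  rw [Complex.inner, norm_mul, mul_pow] at key
  rw [hre]
  linarith

namespace MeasureTheory

variable {α : Type*} [MeasurableSpace α] {μ : Measure α} {w : α → ℝ}

theorem integrable_withDensity_ofReal_iff (hw : Measurable w) (hw0 : ∀ x, 0 ≤ w x)
    {g : α → ℝ} :
    Integrable g (μ.withDensity fun x => ENNReal.ofReal (w x)) ↔
      Integrable (fun x => w x * g x) μ := by
  rw [integrable_withDensity_iff_integrable_smul' hw.ennreal_ofReal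
    (ae_of_all _ fun _ => ofReal_lt_top)]
  simp only [toReal_ofReal (hw0 _), smul_eq_mul]

theorem integral_withDensity_ofReal (hw : Measurable w) (hw0 : ∀ x, 0 ≤ w x) (g : α → ℝ) :
    ∫ x, g x ∂(μ.withDensity fun x => ENNReal.ofReal (w x)) = ∫ x, w x * g x ∂μ := by
  rw [integral_withDensity_eq_integral_toReal_smul hw.ennreal_ofReal
    (ae_of_all _ fun _ => ofReal_lt_top)]
  simp only [toReal_ofReal (hw0 _), smul_eq_mul]

theorem integrable_rpow_sub_two_mul_conj_mul {p : ℝ} {F h : α → ℂ} (hFm : Measurable F)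
    (hhm : Measurable h) (hFp : Integrable (fun x => ‖F x‖ ^ p) μ)
    (hh : Integrable (fun x => ‖F x‖ ^ (p - 2) * ‖h x‖ ^ 2) μ) :
    Integrable (fun x => ((‖F x‖ ^ (p - 2) : ℝ) : ℂ) * conj (F x) * h x) μ := by
  refine ((hFp.add hh).div_const 2).mono' (by fun_prop : Measurable _).aestronglyMeasurable
    (ae_of_all _ fun x => ?_)
  simpa [abs_of_nonneg (Real.rpow_nonneg (norm_nonneg (F x)) _)] using
    Real.rpow_sub_two_mul_mul_le (norm_nonneg (F x)) p ‖h x‖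

end MeasureTheory

/-- Integrated form of the pointwise inequality
`|F+th|^p ≤ |F|^p + p|F|^{p-2} Re(t·conj(F)h) + (p/2)|t|²|F|^{p-2}|h|²`,
where `ν = |F|^{p-2} dμ`. -/
theorem stmt_19 {α : Type*} [MeasurableSpace α] (μ : Measure α) (p : ℝ)
    (hp0 : 0 < p) (hp2 : p < 2) (F h : α → ℂ) (hFm : Measurable F) (hhm : Measurable h)
    (hFp : Integrable (fun x => ‖F x‖ ^ p) μ)
    (hF0 : μ {x | F x = 0} = 0)
    (hh2 : MemLp h 2 (μ.withDensity fun x => ENNReal.ofReal (‖F x‖ ^ (p - 2))))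
    (t : ℂ) :
    ∫ x, ‖F x + t * h x‖ ^ p ∂μ ≤
      (∫ x, ‖F x‖ ^ p ∂μ)
        + p * (t * ∫ x, ((‖F x‖ ^ (p - 2) : ℝ) : ℂ)
            * (starRingEnd ℂ) (F x) * h x ∂μ).re
        + (p / 2) * ‖t‖ ^ 2
          * ∫ x, ‖h x‖ ^ 2
              ∂(μ.withDensity fun x => ENNReal.ofReal (‖F x‖ ^ (p - 2))) := by
  have hw : Measurable fun x => ‖F x‖ ^ (p - 2) := by fun_prop
  have hw0 (x : α) : 0 ≤ ‖F x‖ ^ (p - 2) := Real.rpow_nonneg (norm_nonneg _) _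
  have hh2μ : Integrable (fun x => ‖F x‖ ^ (p - 2) * ‖h x‖ ^ 2) μ :=
    (integrable_withDensity_ofReal_iff hw hw0).1 hh2.norm.integrable_sq
  have hg := (integrable_rpow_sub_two_mul_conj_mul hFm hhm hFp hh2μ).const_mul t
  have hmid : Integrable
      (fun x => p * (t * (((‖F x‖ ^ (p - 2) : ℝ) : ℂ) * conj (F x) * h x)).re) μ :=
    hg.re.const_mul p
  have hleft : Integrable (fun x => ‖F x‖ ^ p
      + p * (t * (((‖F x‖ ^ (p - 2) : ℝ) : ℂ) * conj (F x) * h x)).re) μ :=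
    hFp.add hmid
  have hright : Integrable (fun x => p / 2 * ‖t‖ ^ 2 * (‖F x‖ ^ (p - 2) * ‖h x‖ ^ 2)) μ :=
    hh2μ.const_mul _
  have hFne : ∀ᵐ x ∂μ, F x ≠ 0 := measure_eq_zero_iff_ae_notMem.1 hF0
  calc ∫ x, ‖F x + t * h x‖ ^ p ∂μ
      ≤ ∫ x, ‖F x‖ ^ p + p * (t * (((‖F x‖ ^ (p - 2) : ℝ) : ℂ) * conj (F x) * h x)).re
          + p / 2 * ‖t‖ ^ 2 * (‖F x‖ ^ (p - 2) * ‖h x‖ ^ 2) ∂μ :=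
        integral_mono_of_nonneg (ae_of_all _ fun x => by positivity) (hleft.add hright)
          (hFne.mono fun x hx => Complex.norm_add_mul_rpow_le hp0.le hp2.le hx t (h x))
    _ = _ := by
        have hre : ∫ x, (t * (((‖F x‖ ^ (p - 2) : ℝ) : ℂ) * conj (F x) * h x)).re ∂μ
            = (∫ x, t * (((‖F x‖ ^ (p - 2) : ℝ) : ℂ) * conj (F x) * h x) ∂μ).re :=
          integral_re hg
        rw [integral_add hleft hright, integral_add hFp hmid, integral_const_mul,
          integral_const_mul, hre, integral_const_mul, integral_withDensity_ofReal hw hw0,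
          mul_assoc]
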